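/- Let H be a hereditary graph property closed under union with K₁, G a graph, and e an edge with γ_H(G) = γ_H(G − e) + 1. Then γ_H(G_{e,1}) = γ_H(G_{e,2}) = γ_H(G) − 1, γ_H(G_{e,3}) = γ_H(G_{e,4}) = γ_H(G_{e,5}) = γ_H(G), and γ_H(G_{e,6}) = γ_H(G) + 1. -/

import Mathlib

open SimpleGraph

/-- A graph property: a class of finite simple graphs on arbitrary vertex types. -/
abbrev GraphProp := ∀ (V : Type), SimpleGraph V → Prop

/-- Closure under graph isomorphism. -/
def IsoClosed (P : GraphProp) : Prop :=
  ∀ (V W : Type) (G : SimpleGraph V) (H : SimpleGraph W), Nonempty (G ≃g H) → P V G → P W H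

/-- A property is nondegenerate if it contains all edgeless graphs. -/
def Nondegenerate (P : GraphProp) : Prop :=
  IsoClosed P ∧ ∀ (V : Type), P V ⊥

/-- Closed under induced subgraphs. -/
def InducedHereditary (P : GraphProp) : Prop :=
  IsoClosed P ∧ ∀ (V : Type) (G : SimpleGraph V) (s : Set V), P V G → P s (G.induce s)

/-- Closed under all subgraphs. -/
def Hereditary (P : GraphProp) : Prop :=
  InducedHereditary P ∧ ∀ (V : Type) (G G' : SimpleGraph V), G' ≤ G → P V G → P V G'

/-- The graph `G` together with one new isolated vertex. -/
def addK1 {V : Type} (G : SimpleGraph V) : SimpleGraph (V ⊕ Unit) where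
  Adj a b := ∃ x y, a = Sum.inl x ∧ b = Sum.inl y ∧ G.Adj x y
  symm := by refine ⟨?_⟩; rintro a b ⟨x, y, rfl, rfl, h⟩; exact ⟨y, x, rfl, rfl, h.symm⟩
  loopless := by refine ⟨?_⟩; rintro a ⟨x, y, rfl, hy, h⟩; simp only [Sum.inl.injEq] at hy; subst hy; exact G.loopless.irrefl _ h

/-- Closure under disjoint union with `K₁`. -/
def ClosedUnderK1 (P : GraphProp) : Prop :=
  ∀ (V : Type) (G : SimpleGraph V), P V G → P (V ⊕ Unit) (addK1 G)

/-- `S` is a dominating set of `G`. -/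
def IsDominating {V : Type} (G : SimpleGraph V) (S : Set V) : Prop :=
  ∀ v ∉ S, ∃ u ∈ S, G.Adj u v

/-- `S` is a dominating set inducing a subgraph with property `P`. -/
def IsDomPSet (P : GraphProp) {V : Type} (G : SimpleGraph V) (S : Set V) : Prop :=
  IsDominating G S ∧ P S (G.induce S)

/-- The domination number with respect to the property `P`. -/
noncomputable def gammaP (P : GraphProp) {V : Type} [Fintype V] (G : SimpleGraph V) : ℕ :=
  sInf (Set.ncard '' {S : Set V | IsDomPSet P G S})

/-- A minimum dominating `P`-set. -/
def IsGammaSet (P : GraphProp) {V : Type} [Fintype V] (G : SimpleGraph V) (S : Set V) : Prop :=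
  IsDomPSet P G S ∧ S.ncard = gammaP P G

/-- The ordinary domination number. -/
noncomputable def gamma {V : Type} [Fintype V] (G : SimpleGraph V) : ℕ :=
  sInf (Set.ncard '' {S : Set V | IsDominating G S})

/-- The graph obtained from `G` by deleting the edge `uv` and replacing it by the
path `u - x₀ - x₁ - ⋯ - x_{t-1} - v` through `t` new vertices. -/
def subdiv {V : Type} (G : SimpleGraph V) (u v : V) (t : ℕ) : SimpleGraph (V ⊕ Fin t) where
  Adj a b := match a, b with
    | Sum.inl a, Sum.inl b => G.Adj a b ∧ ¬((a = u ∧ b = v) ∨ (a = v ∧ b = u))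
    | Sum.inl a, Sum.inr i => (a = u ∧ (i : ℕ) = 0) ∨ (a = v ∧ (i : ℕ) + 1 = t)
    | Sum.inr i, Sum.inl a => (a = u ∧ (i : ℕ) = 0) ∨ (a = v ∧ (i : ℕ) + 1 = t)
    | Sum.inr i, Sum.inr j => (i : ℕ) + 1 = (j : ℕ) ∨ (j : ℕ) + 1 = (i : ℕ)
  symm := by
    refine ⟨?_⟩
    rintro (a | i) (b | j) h
    · exact ⟨h.1.symm, fun hc => h.2 (by tauto)⟩
    · exact h
    · exact h
    · tauto
  loopless := by
    refine ⟨?_⟩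
    rintro (a | i) h
    · exact G.loopless.irrefl a h.1
    · omega

/-- The private neighbour set `pn_G[x, X] = {y : N[y,G] ∩ X = {x}}`. -/
def pn {V : Type} (G : SimpleGraph V) (X : Set V) (x : V) : Set V :=
  {y | insert y (G.neighborSet y) ∩ X = {x}}

/-- The graph `G` with the vertex `v` deleted. -/
abbrev delVert {V : Type} (G : SimpleGraph V) (v : V) : SimpleGraph {w : V // w ≠ v} :=
  G.induce {w : V | w ≠ v}

/-- An independent set. -/
def IsIndep {V : Type} (G : SimpleGraph V) (S : Set V) : Prop :=
  S.Pairwise fun a b => ¬ G.Adj a b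

/-!
Let `k = γ_P(G - uv)`. Any dominating `P`-set of `G - uv` missing `u` or `v` also dominates
`G`, so under `γ_P(G) = k + 1` every minimum one contains both ends of the edge. Conversely,
the original vertices of a dominating `P`-set of `G_{uv,t}` form a `P`-set of `G - uv`
dominating everything except perhaps `u`, `v`; adding at most one isolated end vertex turns it
into a dominating `P`-set of `G`, so it has at least `k` elements. On the new path, vertices not
adjacent to `u` or `v` must be dominated from the path itself. If `X` is a set of such inner
vertices with disjoint closed neighbourhoods covering the inner path, then at least `|X|` path
vertices are needed, and `X` itself, being independent and far from `u` and `v`, can be added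
to a minimum set of `G - uv` as isolated vertices. Hence `γ_P(G_{uv,t}) = k + |X|`, and
for `t = 1, …, 6` one can take `|X| = 0, 0, 1, 1, 1, 2`.
-/

section PSets

variable {P : GraphProp} {V : Type}

theorem IsoClosed.map (hP : IsoClosed P) {W : Type} {G : SimpleGraph V} {H : SimpleGraph W}
    (e : G ≃g H) : P V G → P W H :=
  hP V W G H ⟨e⟩

theorem Hereditary.induce_of_subset (hP : Hereditary P) (F : SimpleGraph V) {r s : Set V}
    (hrs : r ⊆ s) (hs : P s (F.induce s)) : P r (F.induce r) :=
  hP.1.1.map ⟨⟨fun x => ⟨x.1.1, x.2⟩, fun y => ⟨⟨y.1, hrs y.2⟩, y.2⟩, fun _ => rfl, fun _ => rfl⟩,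
    Iff.rfl⟩ (hP.1.2 s (F.induce s) {x : s | (x : V) ∈ r} hs)

theorem Hereditary.induce_of_le (hP : Hereditary P) {F F' : SimpleGraph V} (h : F' ≤ F)
    {s : Set V} (hs : P s (F.induce s)) : P s (F'.induce s) :=
  hP.2 s _ _ (fun _ _ hab => h hab) hs

theorem ClosedUnderK1.induce_insert (hK : ClosedUnderK1 P) (hP : IsoClosed P)
    (F : SimpleGraph V) {C : Set V} {x : V} (hx : x ∉ C) (hxC : ∀ c ∈ C, ¬F.Adj x c)
    (hC : P C (F.induce C)) : P ↑(insert x C) (F.induce (insert x C)) := by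
  classical
  refine hP.map ⟨(Equiv.Set.insert hx).symm, ?_⟩ (hK C _ hC)
  rintro (⟨c, hc⟩ | ⟨⟩) (⟨d, hd⟩ | ⟨⟩)
  · exact ⟨fun h => ⟨_, _, rfl, rfl, h⟩, fun ⟨_, _, h₁, h₂, h⟩ => by cases h₁; cases h₂; exact h⟩
  · exact ⟨fun h => absurd h.symm (hxC c hc), fun ⟨_, _, _, h, _⟩ => by cases h⟩
  · exact ⟨fun h => absurd h (hxC d hd), fun ⟨_, _, h, _, _⟩ => by cases h⟩
  · exact ⟨fun h => absurd h (F.loopless.irrefl x), fun ⟨_, _, h, _, _⟩ => by cases h⟩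

/-- A maximal `P`-set is dominating, since an undominated vertex could be added to it. -/
theorem exists_isDomPSet_of_induce [Finite V] (hK : ClosedUnderK1 P) (hP : IsoClosed P)
    (F : SimpleGraph V) {B : Set V} (hB : P B (F.induce B)) : ∃ C, IsDomPSet P F C := by
  obtain ⟨C, -, hC⟩ := (Set.toFinite {C : Set V | P C (F.induce C)}).exists_le_maximal hB
  refine ⟨C, fun x hx => ?_, hC.prop⟩
  by_contra! hnot
  exact hx (hC.le_of_ge (hK.induce_insert hP F hx (fun c hc h => hnot c hc h.symm) hC.prop)
    (Set.subset_insert x C) (Set.mem_insert x C))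

variable [Fintype V] {G : SimpleGraph V}

theorem gammaP_le_ncard {S : Set V} (hS : IsDomPSet P G S) : gammaP P G ≤ S.ncard :=
  Nat.sInf_le ⟨S, hS, rfl⟩

theorem exists_isGammaSet {S : Set V} (hS : IsDomPSet P G S) : ∃ S, IsGammaSet P G S :=
  Nat.sInf_mem (Set.Nonempty.image Set.ncard ⟨S, hS⟩)

end PSets

section DeleteEdge

variable {P : GraphProp} {V : Type} {G : SimpleGraph V} {u v : V}

theorem deleteEdges_edge_adj {a b : V} :
    (G.deleteEdges {s(u, v)}).Adj a b ↔ G.Adj a b ∧ ¬((a = u ∧ b = v) ∨ (a = v ∧ b = u)) := by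
  simp

theorem induce_deleteEdges_edge {B : Set V} (h : u ∉ B ∨ v ∉ B) :
    (G.deleteEdges {s(u, v)}).induce B = G.induce B := by
  ext ⟨a, ha⟩ ⟨b, hb⟩
  change (G.deleteEdges {s(u, v)}).Adj a b ↔ G.Adj a b
  rw [deleteEdges_edge_adj]
  exact ⟨And.left, fun hab => ⟨hab, by rintro (⟨rfl, rfl⟩ | ⟨rfl, rfl⟩) <;> tauto⟩⟩

theorem IsDomPSet.of_deleteEdges_edge {S : Set V} (hS : IsDomPSet P (G.deleteEdges {s(u, v)}) S)
    (h : u ∉ S ∨ v ∉ S) : IsDomPSet P G S := by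
  refine ⟨fun x hx => ?_, induce_deleteEdges_edge h ▸ hS.2⟩
  obtain ⟨y, hy, hyx⟩ := hS.1 x hx
  exact ⟨y, hy, deleteEdges_le _ hyx⟩

variable [Fintype V]

theorem exists_isGammaSet_deleteEdges (hP : Hereditary P) (hK : ClosedUnderK1 P)
    (hcond : gammaP P G = gammaP P (G.deleteEdges {s(u, v)}) + 1) :
    ∃ S, IsGammaSet P (G.deleteEdges {s(u, v)}) S := by
  obtain ⟨S, hS⟩ : {S | IsDomPSet P G S}.Nonempty := by
    by_contra! h
    simp [gammaP, h] at hcond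
  obtain ⟨C, hC⟩ := exists_isDomPSet_of_induce hK hP.1.1 _
    (hP.induce_of_le (deleteEdges_le {s(u, v)}) hS.2)
  exact exists_isGammaSet hC

theorem IsGammaSet.mem_of_deleteEdges {S : Set V}
    (hcond : gammaP P G = gammaP P (G.deleteEdges {s(u, v)}) + 1)
    (hS : IsGammaSet P (G.deleteEdges {s(u, v)}) S) : u ∈ S ∧ v ∈ S := by
  by_contra! h
  have := gammaP_le_ncard (hS.1.of_deleteEdges_edge (by tauto))
  have := hS.2
  omega

/-- If an end `u` of the edge is not dominated, add it (when `v` is outside) or let `v`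
dominate it (when `v` is inside). -/
theorem gammaP_le_ncard_add_one_of_not_dominated (hP : Hereditary P) (hK : ClosedUnderK1 P)
    (he : G.Adj u v) {B : Set V} (hB : P B ((G.deleteEdges {s(u, v)}).induce B))
    (hdom : ∀ w ∉ B, w ≠ u → w ≠ v → ∃ b ∈ B, (G.deleteEdges {s(u, v)}).Adj b w)
    (hu : u ∉ B) (hBu : ∀ b ∈ B, ¬(G.deleteEdges {s(u, v)}).Adj b u) :
    gammaP P G ≤ B.ncard + 1 := by
  have hGB : P B (G.induce B) := induce_deleteEdges_edge (Or.inl hu) ▸ hB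
  have hdomG : ∀ w ∉ B, w ≠ u → w ≠ v → ∃ b ∈ B, G.Adj b w := fun w hw hwu hwv =>
    (hdom w hw hwu hwv).imp fun b hb => ⟨hb.1, deleteEdges_le _ hb.2⟩
  by_cases hv : v ∈ B
  · have hBdom : IsDomPSet P G B := by
      refine ⟨fun w hw => ?_, hGB⟩
      by_cases hwu : w = u
      · exact ⟨v, hv, hwu ▸ he.symm⟩
      · exact hdomG w hw hwu (fun h => hw (h ▸ hv))
    exact (gammaP_le_ncard hBdom).trans (Nat.le_succ _)
  · have huB : ∀ b ∈ B, ¬G.Adj u b := fun b hb hub => hBu b hb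
      (deleteEdges_edge_adj.2 ⟨hub.symm, by rintro (⟨rfl, rfl⟩ | ⟨rfl, -⟩) <;> tauto⟩)
    have hBdom : IsDomPSet P G (insert u B) := by
      refine ⟨fun w hw => ?_, hK.induce_insert hP.1.1 G hu huB hGB⟩
      rw [Set.mem_insert_iff, not_or] at hw
      by_cases hwv : w = v
      · exact ⟨u, Set.mem_insert u B, hwv ▸ he⟩
      · obtain ⟨b, hb, hbw⟩ := hdomG w hw.2 hw.1 hwv
        exact ⟨b, Set.mem_insert_of_mem u hb, hbw⟩
    exact (gammaP_le_ncard hBdom).trans (Set.ncard_insert_le u B)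

theorem gammaP_deleteEdges_le_ncard (hP : Hereditary P) (hK : ClosedUnderK1 P)
    (he : G.Adj u v) (hcond : gammaP P G = gammaP P (G.deleteEdges {s(u, v)}) + 1)
    {B : Set V} (hB : P B ((G.deleteEdges {s(u, v)}).induce B))
    (hdom : ∀ w ∉ B, w ≠ u → w ≠ v → ∃ b ∈ B, (G.deleteEdges {s(u, v)}).Adj b w) :
    gammaP P (G.deleteEdges {s(u, v)}) ≤ B.ncard := by
  by_cases hu : u ∉ B ∧ ∀ b ∈ B, ¬(G.deleteEdges {s(u, v)}).Adj b u
  · have := gammaP_le_ncard_add_one_of_not_dominated hP hK he hB hdom hu.1 hu.2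
    omega
  by_cases hv : v ∉ B ∧ ∀ b ∈ B, ¬(G.deleteEdges {s(u, v)}).Adj b v
  · rw [Sym2.eq_swap] at hB hdom hv
    have := gammaP_le_ncard_add_one_of_not_dominated hP hK he.symm hB
      (fun w hw hwv hwu => hdom w hw hwu hwv) hv.1 hv.2
    omega
  refine gammaP_le_ncard ⟨fun w hw => ?_, hB⟩
  by_cases hwu : w = u
  · subst hwu; simpa [hw] using hu
  by_cases hwv : w = v
  · subst hwv; simpa [hw] using hv
  exact hdom w hw hwu hwv

end DeleteEdge

theorem Set.ncard_image_inl_union_image_inr {α β : Type*} {s : Set α} {t : Set β}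
    (hs : s.Finite) (ht : t.Finite) :
    (Sum.inl '' s ∪ Sum.inr '' t : Set (α ⊕ β)).ncard = s.ncard + t.ncard := by
  rw [Set.ncard_union_eq Set.disjoint_image_inl_image_inr (hs.image _) (ht.image _),
    Set.ncard_image_of_injective _ Sum.inl_injective,
    Set.ncard_image_of_injective _ Sum.inr_injective]

section Subdivision

variable {P : GraphProp} {V : Type} {G : SimpleGraph V} {u v : V} {t : ℕ}

@[simp]
theorem subdiv_adj_inl_inl {a b : V} :
    (subdiv G u v t).Adj (Sum.inl a) (Sum.inl b) ↔ (G.deleteEdges {s(u, v)}).Adj a b :=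
  deleteEdges_edge_adj.symm

@[simp]
theorem subdiv_adj_inl_inr {a : V} {i : Fin t} :
    (subdiv G u v t).Adj (Sum.inl a) (Sum.inr i) ↔
      (a = u ∧ (i : ℕ) = 0) ∨ (a = v ∧ (i : ℕ) + 1 = t) := Iff.rfl

@[simp]
theorem subdiv_adj_inr_inl {a : V} {i : Fin t} :
    (subdiv G u v t).Adj (Sum.inr i) (Sum.inl a) ↔
      (a = u ∧ (i : ℕ) = 0) ∨ (a = v ∧ (i : ℕ) + 1 = t) := Iff.rfl

@[simp]
theorem subdiv_adj_inr_inr {i j : Fin t} :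
    (subdiv G u v t).Adj (Sum.inr i) (Sum.inr j) ↔
      (i : ℕ) + 1 = (j : ℕ) ∨ (j : ℕ) + 1 = (i : ℕ) := Iff.rfl

variable (G u v t) in
noncomputable def subdivInduceInlIso (s : Set V) :
    (G.deleteEdges {s(u, v)}).induce s ≃g (subdiv G u v t).induce (Sum.inl '' s) where
  toEquiv := Equiv.Set.image Sum.inl s Sum.inl_injective
  map_rel_iff' := subdiv_adj_inl_inl (t := t)

theorem gammaP_deleteEdges_le_ncard_preimage_inl [Fintype V] (hP : Hereditary P)
    (hK : ClosedUnderK1 P) (he : G.Adj u v)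
    (hcond : gammaP P G = gammaP P (G.deleteEdges {s(u, v)}) + 1)
    {T : Set (V ⊕ Fin t)} (hT : IsDomPSet P (subdiv G u v t) T) :
    gammaP P (G.deleteEdges {s(u, v)}) ≤ (Sum.inl ⁻¹' T).ncard := by
  refine gammaP_deleteEdges_le_ncard hP hK he hcond ?_ fun w hw hwu hwv => ?_
  · exact hP.1.1.map (subdivInduceInlIso G u v t _).symm
      (hP.induce_of_subset _ (Set.image_preimage_subset _ _) hT.2)
  · obtain ⟨b | i, hb, hbw⟩ := hT.1 (Sum.inl w) hw
    · exact ⟨b, hb, subdiv_adj_inl_inl.1 hbw⟩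
    · simp [hwu, hwv] at hbw

/-- An inner path vertex of `G_{uv,t}` can only be dominated from its closed neighbourhood on
the path, and these neighbourhoods are disjoint for vertices at distance at least `3`. -/
theorem card_le_ncard_preimage_inr {T : Set (V ⊕ Fin t)}
    (hT : IsDominating (subdiv G u v t) T) (X : Finset (Fin t))
    (hX : ∀ i ∈ X, 0 < (i : ℕ) ∧ (i : ℕ) + 1 < t)
    (hsep : ∀ i ∈ X, ∀ j ∈ X, (i : ℕ) ≤ j + 2 → (j : ℕ) ≤ i + 2 → i = j) :
    X.card ≤ (Sum.inr ⁻¹' T).ncard := by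
  have hnear : ∀ i ∈ X, ∃ j ∈ Sum.inr ⁻¹' T, (i : ℕ) ≤ j + 1 ∧ (j : ℕ) ≤ i + 1 := by
    intro i hi
    by_cases hiT : Sum.inr i ∈ T
    · exact ⟨i, hiT, by omega⟩
    obtain ⟨a | j, ha, hai⟩ := hT (Sum.inr i) hiT
    · have := hX i hi
      simp only [subdiv_adj_inl_inr] at hai
      omega
    · exact ⟨j, ha, by simp only [subdiv_adj_inr_inr] at hai; omega⟩
  choose! f hfT hf using hnear
  rw [← Set.ncard_coe_finset]
  refine Set.ncard_le_ncard_of_injOn f hfT fun i hi j hj hij => hsep i hi j hj ?_ ?_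
  · have := hf i hi; have := hf j hj; have := congrArg Fin.val hij; omega
  · have := hf i hi; have := hf j hj; have := congrArg Fin.val hij; omega

theorem induce_subdiv_image_inl_union_image_inr (hP : Hereditary P) (hK : ClosedUnderK1 P)
    {S : Set V} (hS : P S ((G.deleteEdges {s(u, v)}).induce S)) (X : Finset (Fin t))
    (hX : ∀ i ∈ X, 0 < (i : ℕ) ∧ (i : ℕ) + 1 < t)
    (hsep : ∀ i ∈ X, ∀ j ∈ X, (i : ℕ) + 1 ≠ j) :
    P ↑(Sum.inl '' S ∪ Sum.inr '' (X : Set (Fin t)))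
      ((subdiv G u v t).induce (Sum.inl '' S ∪ Sum.inr '' (X : Set (Fin t)))) := by
  induction X using Finset.induction_on with
  | empty =>
    rw [Finset.coe_empty, Set.image_empty, Set.union_empty]
    exact hP.1.1.map (subdivInduceInlIso G u v t S) hS
  | insert j X hj ih =>
    rw [Finset.coe_insert, Set.image_insert_eq, Set.union_insert]
    have hjX := hX j (Finset.mem_insert_self j X)
    refine hK.induce_insert hP.1.1 _ (by simpa using hj) ?_
      (ih (fun i hi => hX i (Finset.mem_insert_of_mem hi))
        (fun i hi k hk => hsep i (Finset.mem_insert_of_mem hi) k (Finset.mem_insert_of_mem hk)))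
    rintro _ (⟨a, -, rfl⟩ | ⟨i, hi, rfl⟩)
    · simp only [subdiv_adj_inr_inl]
      omega
    · have := hsep j (Finset.mem_insert_self j X) i (Finset.mem_insert_of_mem hi)
      have := hsep i (Finset.mem_insert_of_mem hi) j (Finset.mem_insert_self j X)
      simp only [subdiv_adj_inr_inr]
      omega

theorem isDomPSet_subdiv_image_inl_union_image_inr (hP : Hereditary P) (hK : ClosedUnderK1 P)
    {S : Set V} (hS : IsDomPSet P (G.deleteEdges {s(u, v)}) S) (hu : u ∈ S) (hv : v ∈ S)
    (X : Finset (Fin t)) (hX : ∀ i ∈ X, 0 < (i : ℕ) ∧ (i : ℕ) + 1 < t)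
    (hsep : ∀ i ∈ X, ∀ j ∈ X, (i : ℕ) + 1 ≠ j)
    (hcover : ∀ i : Fin t, 0 < (i : ℕ) → (i : ℕ) + 1 < t →
      ∃ j ∈ X, (i : ℕ) ≤ j + 1 ∧ (j : ℕ) ≤ i + 1) :
    IsDomPSet P (subdiv G u v t) (Sum.inl '' S ∪ Sum.inr '' (X : Set (Fin t))) := by
  refine ⟨?_, induce_subdiv_image_inl_union_image_inr hP hK hS.2 X hX hsep⟩
  rintro (w | i) hw
  · obtain ⟨b, hb, hbw⟩ := hS.1 w (fun h => hw (Or.inl ⟨w, h, rfl⟩))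
    exact ⟨Sum.inl b, Or.inl ⟨b, hb, rfl⟩, subdiv_adj_inl_inl.2 hbw⟩
  by_cases hi0 : (i : ℕ) = 0
  · exact ⟨Sum.inl u, Or.inl ⟨u, hu, rfl⟩, by simp [hi0]⟩
  by_cases hit : (i : ℕ) + 1 = t
  · exact ⟨Sum.inl v, Or.inl ⟨v, hv, rfl⟩, by simp [hit]⟩
  obtain ⟨j, hj, hij⟩ := hcover i (by omega) (by omega)
  have hji : j ≠ i := by rintro rfl; exact hw (Or.inr ⟨j, hj, rfl⟩)
  refine ⟨Sum.inr j, Or.inr ⟨j, hj, rfl⟩, ?_⟩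
  have := Fin.val_ne_of_ne hji
  simp only [subdiv_adj_inr_inr]
  omega

theorem gammaP_subdiv_eq [Fintype V] (hP : Hereditary P) (hK : ClosedUnderK1 P)
    (he : G.Adj u v) (hcond : gammaP P G = gammaP P (G.deleteEdges {s(u, v)}) + 1)
    (X : Finset (Fin t)) (hX : ∀ i ∈ X, 0 < (i : ℕ) ∧ (i : ℕ) + 1 < t)
    (hsep : ∀ i ∈ X, ∀ j ∈ X, (i : ℕ) ≤ j + 2 → (j : ℕ) ≤ i + 2 → i = j)
    (hcover : ∀ i : Fin t, 0 < (i : ℕ) → (i : ℕ) + 1 < t →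
      ∃ j ∈ X, (i : ℕ) ≤ j + 1 ∧ (j : ℕ) ≤ i + 1) :
    gammaP P (subdiv G u v t) = gammaP P (G.deleteEdges {s(u, v)}) + X.card := by
  obtain ⟨S, hS⟩ := exists_isGammaSet_deleteEdges hP hK hcond
  obtain ⟨hu, hv⟩ := hS.mem_of_deleteEdges hcond
  have hadj : ∀ i ∈ X, ∀ j ∈ X, (i : ℕ) + 1 ≠ j := fun i hi j hj hij =>
    absurd (congrArg Fin.val (hsep i hi j hj (by omega) (by omega))) (by omega)
  have hC := isDomPSet_subdiv_image_inl_union_image_inr hP hK hS.1 hu hv X hX hadj hcover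
  obtain ⟨T, hT, hTcard⟩ := exists_isGammaSet hC
  have hupper := gammaP_le_ncard hC
  rw [Set.ncard_image_inl_union_image_inr (Set.toFinite S) (Set.toFinite _),
    Set.ncard_coe_finset, hS.2] at hupper
  have hlower := gammaP_deleteEdges_le_ncard_preimage_inl hP hK he hcond hT
  have hpath := card_le_ncard_preimage_inr hT.1 X hX hsep
  rw [← Set.image_preimage_inl_union_image_preimage_inr T,
    Set.ncard_image_inl_union_image_inr (Set.toFinite _) (Set.toFinite _)] at hTcard
  omega

end Subdivision

/-- if `γ_H(G) = γ_H(G − e) + 1` then the values of `γ_H(G_{e,t})`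
for `t = 1, …, 6` are as given. -/
theorem gammaP_subdiv_values (P : GraphProp) (h1 : Hereditary P) (h2 : ClosedUnderK1 P)
    {V : Type} [Fintype V] (G : SimpleGraph V) (u v : V) (he : G.Adj u v)
    (hcond : gammaP P G = gammaP P (G.deleteEdges {s(u, v)}) + 1) :
    gammaP P (subdiv G u v 1) = gammaP P G - 1 ∧
    gammaP P (subdiv G u v 2) = gammaP P G - 1 ∧
    gammaP P (subdiv G u v 3) = gammaP P G ∧
    gammaP P (subdiv G u v 4) = gammaP P G ∧
    gammaP P (subdiv G u v 5) = gammaP P G ∧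
    gammaP P (subdiv G u v 6) = gammaP P G + 1 := by
  have key := fun t X hX hsep hcover =>
    gammaP_subdiv_eq (t := t) h1 h2 he hcond X hX hsep hcover
  rw [key 1 ∅ (by decide) (by decide) (by decide), key 2 ∅ (by decide) (by decide) (by decide),
    key 3 {1} (by decide) (by decide) (by decide), key 4 {1} (by decide) (by decide) (by decide),
    key 5 {2} (by decide) (by decide) (by decide), key 6 {1, 4} (by decide) (by decide) (by decide),
    hcond]
  simp
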